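/- arXiv:0706.0671 — 5 statements merged into one kernel-verified Lean document; each statement's English description precedes it below -/
import Mathlib

section
/- Let K be a field of characteristic p > 0 with a discrete valuation, and let K̂ be its completion. If [K : K^p] is finite, then [K : K^p] ≥ [K̂ : K̂^p]. -/
open Multiplicative UniformSpace

open scoped WithZero

/-- The subring of `p`-th powers of `A` (in characteristic `p` this is exactly the image of
the Frobenius). -/
def pthPowers (A : Type*) [CommRing A] (p : ℕ) : Subring A := Subring.closure (Set.range (· ^ p))

/-! Give `K̂` the norm of its discrete valuation. Since `‖x ^ p - y ^ p‖ = ‖x - y‖ ^ p`, the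
Frobenius is a uniform embedding, so `K̂ ^ p` is complete. A `K ^ p`-basis of `K` then spans a
finite-dimensional, hence closed, `K̂ ^ p`-subspace of `K̂` containing the dense subfield `K`,
so it spans `K̂`. -/

theorem pthPowers_eq_fieldRange_frobenius (K : Type*) [Field K] (p : ℕ) [ExpChar K p] :
    pthPowers K p = (frobenius K p).fieldRange.toSubring := by
  rw [pthPowers]
  have : Set.range (· ^ p : K → K) = ((frobenius K p).range : Set K) := by
    ext x; simp [frobenius_def, eq_comm]
  rw [this, Subring.closure_eq]
  ext x; simp [RingHom.mem_fieldRange, RingHom.mem_range]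

theorem Valuation.isNontrivial_of_surjective {R Γ₀ : Type*} [Ring R]
    [LinearOrderedCommGroupWithZero Γ₀] [Nontrivial Γ₀ˣ] {v : Valuation R Γ₀}
    (hv : Function.Surjective v) : v.IsNontrivial := by
  obtain ⟨u, hu⟩ := exists_ne (1 : Γ₀ˣ)
  obtain ⟨x, hx⟩ := hv u
  exact ⟨x, hx ▸ u.ne_zero, by rw [hx]; exact Units.val_eq_one.not.mpr hu⟩

instance Valued.isNontrivial_completion {K Γ₀ : Type*} [Field K]
    [LinearOrderedCommGroupWithZero Γ₀] [Valued K Γ₀]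
    [hv : (Valued.v : Valuation K Γ₀).IsNontrivial] :
    (Valued.v : Valuation (Completion K) Γ₀).IsNontrivial := by
  obtain ⟨x, hx⟩ := hv
  exact ⟨x, by rwa [Valued.valuedCompletion_apply]⟩

section NormedField

variable {L : Type*} [NormedField L] (p : ℕ) [ExpChar L p]

theorem dist_frobenius (x y : L) :
    dist (frobenius L p x) (frobenius L p y) = dist x y ^ p := by
  rw [dist_eq_norm, dist_eq_norm, ← map_sub, frobenius_def, norm_pow]

theorem isUniformInducing_frobenius : IsUniformInducing (frobenius L p) := by
  refine Metric.isUniformInducing_iff.2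
    ⟨uniformContinuous_addMonoidHom_of_continuous (continuous_pow p), fun δ hδ => ?_⟩
  refine ⟨δ ^ p, pow_pos hδ p, fun h => ?_⟩
  rw [dist_frobenius] at h
  exact lt_of_pow_lt_pow_left₀ p hδ.le h

theorem isClosed_range_frobenius [CompleteSpace L] : IsClosed (Set.range (frobenius L p)) :=
  (isUniformInducing_frobenius p).isComplete_range.isClosed

instance [CompleteSpace L] : CompleteSpace (frobenius L p).fieldRange :=
  (isClosed_range_frobenius p).completeSpace_coe

end NormedField

theorem map_fieldRange_frobenius_le {K L : Type*} [Field K] [Field L] (p : ℕ) [ExpChar K p]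
    [ExpChar L p] (f : K →+* L) :
    (frobenius K p).fieldRange.map f ≤ (frobenius L p).fieldRange := by
  rintro _ ⟨_, ⟨x, rfl⟩, rfl⟩
  exact ⟨f x, (f.map_frobenius p x).symm⟩

theorem image_span_subset_span_image {K L : Type*} [Field K] [Field L] (f : K →+* L)
    {F : Subfield K} {E : Subfield L} (hFE : F.map f ≤ E) (s : Set K) :
    f '' (Submodule.span F s) ⊆ Submodule.span E (f '' s) := by
  rintro _ ⟨x, hx, rfl⟩
  induction hx using Submodule.span_induction with
  | mem x hx => exact Submodule.subset_span (Set.mem_image_of_mem f hx)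
  | zero => simp
  | add x y _ _ hx hy => simpa using add_mem hx hy
  | smul c x _ hx =>
    have hc : f c ∈ E := hFE ⟨c, c.2, rfl⟩
    simpa [Subfield.smul_def] using Submodule.smul_mem _ (⟨f c, hc⟩ : E) hx

theorem rank_le_finrank_of_denseRange {K L : Type*} [Field K] [NormedField L] (f : K →+* L)
    (hf : DenseRange f) {F : Subfield K} {E : Subfield L} (hFE : F.map f ≤ E)
    [FiniteDimensional F K] [CompleteSpace E] (hE : ∃ x ∈ E, 1 < ‖x‖) :
    Module.rank E L ≤ Module.finrank F K := by
  obtain ⟨x, hxE, hx⟩ := hE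
  let : NontriviallyNormedField E :=
    { SubfieldClass.toNormedField E with non_trivial := ⟨⟨x, hxE⟩, hx⟩ }
  let b := Module.finBasis F K
  let V := Submodule.span E (f '' Set.range b)
  have : FiniteDimensional E V :=
    FiniteDimensional.span_of_finite _ ((Set.finite_range b).image f)
  have hV : V = ⊤ := by
    have hsub : Set.range f ⊆ V := by
      simpa [b.span_eq] using image_span_subset_span_image f hFE (Set.range b)
    exact Submodule.eq_top_iff'.2 fun y =>
      V.closed_of_finiteDimensional.closure_subset_iff.2 hsub (hf y)
  calc Module.rank E L = Module.rank E V := by rw [hV, rank_top]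
    _ ≤ Cardinal.mk (f '' Set.range b) := rank_span_le _
    _ ≤ Module.finrank F K := by
      simpa [← Set.range_comp] using Cardinal.mk_range_le_lift (f := f ∘ b)

/-- Let `K` be a field of characteristic `p > 0` with a discrete valuation
(a valuation with value group `ℤ`), and `K̂` its completion.  If `[K : K^p]` is finite then
`[K : K^p] ≥ [K̂ : K̂^p]`. -/
theorem pRank_completion_le {K : Type u} [Field K] (p : ℕ) (hp : p.Prime) [CharP K p]
    [Valued K (WithZero (Multiplicative ℤ))]
    (hdisc : Function.Surjective (Valued.v : K → WithZero (Multiplicative ℤ)))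
    (hfin : Module.rank (pthPowers K p) K < Cardinal.aleph0) :
    Module.rank (pthPowers (Completion K) p) (Completion K) ≤
      Module.rank (pthPowers K p) K := by
  have : Fact p.Prime := ⟨hp⟩
  have : CharP (Completion K) p :=
    charP_of_injective_ringHom (f := Completion.coeRingHom) (Completion.coe_injective K) p
  have := Valuation.isNontrivial_of_surjective hdisc
  let := Valuation.IsRankOneDiscrete.rankOne
    (Valued.v : Valuation (Completion K) ℤᵐ⁰) one_lt_two
  let := Valued.toNontriviallyNormedField (Completion K) ℤᵐ⁰
  rw [pthPowers_eq_fieldRange_frobenius] at hfin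
  rw [pthPowers_eq_fieldRange_frobenius, pthPowers_eq_fieldRange_frobenius]
  have : FiniteDimensional (frobenius K p).fieldRange K := Module.rank_lt_aleph0_iff.mp hfin
  obtain ⟨x, hx⟩ := NormedField.exists_one_lt_norm (Completion K)
  calc _ ≤ (Module.finrank (frobenius K p).fieldRange K : Cardinal) :=
        rank_le_finrank_of_denseRange Completion.coeRingHom Completion.denseRange_coe
          (map_fieldRange_frobenius_le p _)
          ⟨x ^ p, ⟨x, rfl⟩, by simpa using one_lt_pow₀ hx hp.ne_zero⟩
    _ = _ := Module.finrank_eq_rank _ _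
end

section
/- Let A be a ring of characteristic p > 0 admitting a finite p-basis {b_i}_{i∈I}. Then for any n ≥ 0, the set {b_i}_{i∈I} ∪ {x_1, …, x_n} is a p-basis of the power series ring A[[x_1, …, x_n]]. -/
/-- `b : I → A` is a `p`-basis of `A`: the monomials `∏ i, b i ^ ϑ i` for finitely supported
`ϑ : I →₀ ℕ` with values `< p` form a basis of `A` as a module over the subring `A^p`. -/
def IsPBasis (p : ℕ) {A : Type*} [CommRing A] {I : Type*} (b : I → A) : Prop :=
  LinearIndependent (pthPowers A p)
    (fun ϑ : {ϑ : I →₀ ℕ // ∀ i, ϑ i < p} => ϑ.1.prod fun i e => b i ^ e) ∧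
  ⊤ ≤ Submodule.span (pthPowers A p)
    (Set.range fun ϑ : {ϑ : I →₀ ℕ // ∀ i, ϑ i < p} => ϑ.1.prod fun i e => b i ^ e)


/-!
In characteristic `p` we have `g ^ p = ∑ (coeff q g) ^ p X ^ (p • q)`. Every exponent splits
uniquely as `p • q + ε` with `0 ≤ ε < p` componentwise, so the coefficient of `X ^ (p • q + ε)`
in `∑_{ϑ, ε'} g_{ϑ,ε'} ^ p b ^ ϑ X ^ ε'` is `∑_ϑ (coeff q g_{ϑ,ε}) ^ p b ^ ϑ`, a combination of
the `b ^ ϑ` with coefficients in `A ^ p`. Linear independence and spanning over `A[[X]] ^ p` thus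
reduce, coefficient by coefficient, to the same properties of `b` over `A ^ p`.
-/

abbrev ExponentsBelow (p : ℕ) (I : Type*) := {ϑ : I →₀ ℕ // ∀ i, ϑ i < p}

namespace ExponentsBelow

variable {p : ℕ} {I J : Type*}

instance [Finite I] : Finite (ExponentsBelow p I) :=
  Finite.of_injective (fun ϑ i => (⟨ϑ.1 i, ϑ.2 i⟩ : Fin p)) fun _ _ h =>
    Subtype.ext <| Finsupp.ext fun i => congrArg Fin.val (congrFun h i)

noncomputable instance [Finite I] : Fintype (ExponentsBelow p I) := Fintype.ofFinite _

noncomputable def sumEquiv :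
    ExponentsBelow p (I ⊕ J) ≃ ExponentsBelow p I × ExponentsBelow p J :=
  (Equiv.subtypeEquiv Finsupp.sumFinsuppEquivProdFinsupp fun _ => Sum.forall).trans
    Equiv.subtypeProdEquivProd

theorem sumEquiv_symm_val (x : ExponentsBelow p I × ExponentsBelow p J) :
    (sumEquiv.symm x).1 = Finsupp.sumElim x.1.1 x.2.1 := rfl

theorem exists_nsmul_add (hp : 0 < p) (k : I →₀ ℕ) :
    ∃ (q : I →₀ ℕ) (ε : ExponentsBelow p I), p • q + ε.1 = k :=
  ⟨k.mapRange (· / p) (Nat.zero_div p), ⟨k.mapRange (· % p) (Nat.zero_mod p),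
    fun i => Nat.mod_lt _ hp⟩, Finsupp.ext fun i => by simp [Nat.div_add_mod]⟩

end ExponentsBelow

section PMonomial

variable {p : ℕ} {I J : Type*}

def pMonomial {M : Type*} [CommMonoid M] (b : I → M) (ϑ : ExponentsBelow p I) : M :=
  ϑ.1.prod fun i e => b i ^ e

theorem isPBasis_iff {A : Type*} [CommRing A] {b : I → A} :
    IsPBasis p b ↔ LinearIndependent (pthPowers A p) (pMonomial (p := p) b) ∧
      ⊤ ≤ Submodule.span (pthPowers A p) (Set.range (pMonomial (p := p) b)) :=
  Iff.rfl

theorem pMonomial_sumElim {M : Type*} [CommMonoid M] (b : I → M) (c : J → M)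
    (x : ExponentsBelow p I × ExponentsBelow p J) :
    pMonomial (Sum.elim b c) (ExponentsBelow.sumEquiv.symm x) =
      pMonomial b x.1 * pMonomial c x.2 := by
  rw [pMonomial, ExponentsBelow.sumEquiv_symm_val]
  exact Finset.prod_disjSum _ _ _

theorem isPBasis_sumElim_iff {A : Type*} [CommRing A] (b : I → A) (c : J → A) :
    IsPBasis p (Sum.elim b c) ↔
      LinearIndependent (pthPowers A p) (fun x : ExponentsBelow p I × ExponentsBelow p J =>
          pMonomial b x.1 * pMonomial c x.2) ∧
        ⊤ ≤ Submodule.span (pthPowers A p)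
          (Set.range fun x : ExponentsBelow p I × ExponentsBelow p J =>
            pMonomial b x.1 * pMonomial c x.2) := by
  have h : (fun x : ExponentsBelow p I × ExponentsBelow p J =>
      pMonomial b x.1 * pMonomial c x.2) =
        pMonomial (Sum.elim b c) ∘ ExponentsBelow.sumEquiv.symm :=
    funext fun x => (pMonomial_sumElim b c x).symm
  rw [isPBasis_iff, h, linearIndependent_equiv, EquivLike.range_comp]

end PMonomial

theorem mem_pthPowers_iff {R : Type*} [CommRing R] {p : ℕ} [ExpChar R p] {x : R} :
    x ∈ pthPowers R p ↔ ∃ c : R, c ^ p = x := by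
  have h : Set.range (· ^ p : R → R) = (frobenius R p).range := by
    ext; simp [frobenius_def]
  rw [pthPowers, h, Subring.closure_eq, RingHom.mem_range]
  simp [frobenius_def]

theorem Nat.eq_of_dvd_mul_add_sub {p a b c : ℕ} (hb : b < p) (hc : c < p)
    (hle : c ≤ p * a + b) (h : p ∣ p * a + b - c) : b = c := by
  have := (Nat.modEq_iff_dvd' hle).mpr h
  rwa [Nat.ModEq, Nat.mul_add_mod, Nat.mod_eq_of_lt hb, Nat.mod_eq_of_lt hc, eq_comm] at this

namespace MvPowerSeries

variable {σ A : Type*} [CommRing A] {p : ℕ}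

theorem pMonomial_C {I : Type*} (b : I → A) (ϑ : ExponentsBelow p I) :
    pMonomial (fun i => C (b i) : I → MvPowerSeries σ A) ϑ = C (pMonomial b ϑ) := by
  simp only [pMonomial, map_finsuppProd, map_pow]

theorem pMonomial_X (ε : ExponentsBelow p σ) :
    pMonomial (X : σ → MvPowerSeries σ A) ε = monomial ε.1 1 :=
  (monomial_one_eq ε.1).symm

variable [ExpChar A p]

instance : ExpChar (MvPowerSeries σ A) p := expChar_of_injective_ringHom C_injective p

theorem coeff_nsmul_pow_char (g : MvPowerSeries σ A) (q : σ →₀ ℕ) :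
    coeff (p • q) (g ^ p) = coeff q g ^ p := by
  rw [← map_frobenius_expand p (expChar_ne_zero A p), coeff_map, coeff_expand_smul,
    frobenius_def]

theorem coeff_pow_char_of_not_dvd (g : MvPowerSeries σ A) {k : σ →₀ ℕ} {i : σ}
    (h : ¬ p ∣ k i) : coeff k (g ^ p) = 0 := by
  rw [← map_frobenius_expand p (expChar_ne_zero A p), coeff_map,
    coeff_expand_of_not_dvd p _ g h, map_zero]

theorem pow_char_eq_zero_iff (g : MvPowerSeries σ A) :
    g ^ p = 0 ↔ ∀ q, coeff q g ^ p = 0 := by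
  refine ⟨fun h q => by rw [← coeff_nsmul_pow_char, h, map_zero], fun h => ?_⟩
  ext k
  by_cases hk : ∀ i, p ∣ k i
  · obtain ⟨q, rfl⟩ : ∃ q, k = p • q := ⟨k.mapRange (· / p) (Nat.zero_div p),
      Finsupp.ext fun i => by simp [Nat.mul_div_cancel' (hk i)]⟩
    rw [coeff_nsmul_pow_char, h, map_zero]
  · obtain ⟨i, hi⟩ := not_forall.mp hk
    rw [coeff_pow_char_of_not_dvd g hi, map_zero]

open Classical in
theorem coeff_pow_char_mul_monomial (g : MvPowerSeries σ A) (q : σ →₀ ℕ)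
    (ε ε₀ : ExponentsBelow p σ) :
    coeff (p • q + ε₀.1) (g ^ p * monomial ε.1 1) =
      if ε = ε₀ then coeff q g ^ p else 0 := by
  rw [coeff_mul_monomial, mul_one]
  split_ifs with hle hε hε
  · rw [hε, add_tsub_cancel_right, coeff_nsmul_pow_char]
  · obtain ⟨i, hi⟩ : ∃ i, ε.1 i ≠ ε₀.1 i := by
      by_contra! h
      exact hε (Subtype.ext (Finsupp.ext h))
    refine coeff_pow_char_of_not_dvd g (i := i) fun hdvd => hi ?_
    simp only [Finsupp.tsub_apply, Finsupp.add_apply, Finsupp.smul_apply, smul_eq_mul] at hdvd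
    exact (Nat.eq_of_dvd_mul_add_sub (ε₀.2 i) (ε.2 i) (by simpa using hle i) hdvd).symm
  · exact absurd (hε ▸ le_add_self) hle
  · rfl

variable [Finite σ] {I : Type*} [Finite I] (b : I → A)

theorem coeff_sum_pow_char_mul_C_mul_monomial
    (w : ExponentsBelow p I × ExponentsBelow p σ → MvPowerSeries σ A) (q : σ →₀ ℕ)
    (ε₀ : ExponentsBelow p σ) :
    coeff (p • q + ε₀.1) (∑ x, w x ^ p * (C (pMonomial b x.1) * monomial x.2.1 1)) =
      ∑ ϑ, coeff q (w (ϑ, ε₀)) ^ p * pMonomial b ϑ := by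
  classical
  rw [map_sum, Fintype.sum_prod_type]
  refine Finset.sum_congr rfl fun ϑ _ => ?_
  simp only [mul_left_comm _ (C _), coeff_C_mul, coeff_pow_char_mul_monomial, mul_ite, mul_zero,
    Finset.sum_ite_eq', Finset.mem_univ, if_true]
  exact mul_comm _ _

theorem linearIndependent_C_mul_monomial
    (hb : LinearIndependent (pthPowers A p) (pMonomial (p := p) b)) :
    LinearIndependent (pthPowers (MvPowerSeries σ A) p)
      (fun x : ExponentsBelow p I × ExponentsBelow p σ =>
        C (pMonomial b x.1) * monomial x.2.1 1) := by
  rw [Fintype.linearIndependent_iff]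
  intro s hs x
  choose w hw using fun x => mem_pthPowers_iff.mp (s x).2
  have hcoeff : ∀ ϑ ε q, coeff q (w (ϑ, ε)) ^ p = 0 := by
    intro ϑ ε q
    have h := congrArg (coeff (p • q + ε.1)) hs
    simp only [Subring.smul_def, smul_eq_mul, ← hw, coeff_sum_pow_char_mul_C_mul_monomial,
      map_zero] at h
    exact congrArg Subtype.val <| Fintype.linearIndependent_iff.mp hb
      (fun ϑ => ⟨_, mem_pthPowers_iff.mpr ⟨coeff q (w (ϑ, ε)), rfl⟩⟩) h ϑ
  exact Subtype.ext <| (hw x).symm.trans <| (pow_char_eq_zero_iff _).mpr (hcoeff x.1 x.2)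

theorem span_C_mul_monomial
    (hb : ⊤ ≤ Submodule.span (pthPowers A p) (Set.range (pMonomial (p := p) b))) :
    ⊤ ≤ Submodule.span (pthPowers (MvPowerSeries σ A) p) (Set.range
      fun x : ExponentsBelow p I × ExponentsBelow p σ =>
        C (pMonomial b x.1) * monomial x.2.1 1) := by
  rintro f -
  choose c hc using fun a : A =>
    (Submodule.mem_span_range_iff_exists_fun _).mp (hb (Submodule.mem_top (x := a)))
  choose r hr using fun k ϑ => mem_pthPowers_iff.mp (c (coeff k f) ϑ).2
  let w : ExponentsBelow p I × ExponentsBelow p σ → MvPowerSeries σ A :=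
    fun x q => r (p • q + x.2.1) x.1
  have hf : f = ∑ x, w x ^ p * (C (pMonomial b x.1) * monomial x.2.1 1) := by
    ext k
    obtain ⟨q, ε, rfl⟩ := ExponentsBelow.exists_nsmul_add (expChar_pos A p) k
    rw [coeff_sum_pow_char_mul_C_mul_monomial, ← hc (coeff _ f)]
    exact Finset.sum_congr rfl fun ϑ _ => by rw [Subring.smul_def, smul_eq_mul, ← hr]; rfl
  rw [hf]
  exact Submodule.sum_mem _ fun x _ => Submodule.smul_mem _
    (⟨w x ^ p, mem_pthPowers_iff.mpr ⟨_, rfl⟩⟩ : pthPowers (MvPowerSeries σ A) p)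
    (Submodule.subset_span ⟨x, rfl⟩)

end MvPowerSeries

theorem IsPBasis.mvPowerSeries {A : Type*} [CommRing A] {p : ℕ} [ExpChar A p] {I : Type*}
    [Finite I] {b : I → A} (hb : IsPBasis p b) (σ : Type*) [Finite σ] :
    IsPBasis p (Sum.elim (fun i => (MvPowerSeries.C (b i) : MvPowerSeries σ A))
      MvPowerSeries.X) := by
  rw [isPBasis_sumElim_iff]
  simp only [MvPowerSeries.pMonomial_C, MvPowerSeries.pMonomial_X]
  exact ⟨MvPowerSeries.linearIndependent_C_mul_monomial b hb.1,
    MvPowerSeries.span_C_mul_monomial b hb.2⟩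

/-- If `A` is a ring of characteristic `p > 0` with a finite `p`-basis
`{b_i}_{i ∈ I}`, then for any `n ≥ 0` the family `{b_i} ∪ {x_1, …, x_n}` is a `p`-basis of the
power series ring `A[[x_1, …, x_n]]`. -/
theorem isPBasis_mvPowerSeries {A : Type*} [CommRing A] (p : ℕ) (hp : p.Prime) [CharP A p]
    {I : Type*} [Finite I] (b : I → A) (hb : IsPBasis p b) (n : ℕ) :
    IsPBasis p (Sum.elim (fun i => (MvPowerSeries.C : A →+* MvPowerSeries (Fin n) A) (b i))
      (fun j : Fin n => MvPowerSeries.X j)) :=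
  have : ExpChar A p := ExpChar.prime hp
  hb.mvPowerSeries (Fin n)
end

section
/- Let k be a field of characteristic p > 0 of finite p-rank r, with p-basis b_1,…,b_r, and let k((t)) be the field of formal Laurent series. Then the canonical map k/(℘(k) + k_{>0}) → k((t))/(℘(k((t))) + k((t))_{>0}) induced by the inclusion k ↪ k((t)) is bijective, where k((t))_{>0} is taken with respect to the p-basis b_1,…,b_r,t of k((t)). -/
/-- The pure wedge `dc₁ ∧ ⋯ ∧ dc_i` of exact absolute differential forms, as an element of the
`i`-th exterior power of `Ω¹_{L/ℤ}`. -/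
noncomputable def pureD (L : Type*) [Field L] (i : ℕ) (c : Fin i → L) : ⋀[L]^i (Ω[L⁄ℤ]) :=
  ⟨ExteriorAlgebra.ιMulti L i fun j => KaehlerDifferential.D ℤ L (c j),
   ExteriorAlgebra.ιMulti_range L i (Set.mem_range_self _)⟩

/-- `x·dlog y₁ ∧ ⋯ ∧ dlog y_i = (x / ∏ y_j) • (dy₁ ∧ ⋯ ∧ dy_i)` in `Ω^i_L = ⋀^i Ω¹_{L/ℤ}`. -/
noncomputable def dlogWedge (L : Type*) [Field L] (i : ℕ) (x : L) (y : Fin i → L) :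
    ⋀[L]^i (Ω[L⁄ℤ]) := (x / ∏ j, y j) • pureD L i y

/-- The image `dΩ^{i-1}_L ⊆ Ω^i_L` of the exterior derivative: the additive subgroup generated
by pure wedges of exact forms (for `i = 0` it is `0`). -/
noncomputable def exactWedges (L : Type*) [Field L] (i : ℕ) : AddSubgroup (⋀[L]^i (Ω[L⁄ℤ])) :=
  if i = 0 then ⊥ else AddSubgroup.closure (Set.range (pureD L i))

/-- The image of `℘ = 1 - C⁻¹ : Ω^i_L → Ω^i_L/dΩ^{i-1}_L`, described via the characterizing
formula `℘(x·dlog y₁∧⋯∧dlog y_i) = (x - x^p)·dlog y₁∧⋯∧dlog y_i mod dΩ^{i-1}`. -/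
noncomputable def wpImage (L : Type*) [Field L] (p i : ℕ) :
    AddSubgroup ((⋀[L]^i (Ω[L⁄ℤ])) ⧸ exactWedges L i) :=
  AddSubgroup.closure {ω | ∃ (x : L) (y : Fin i → Lˣ),
    ω = QuotientAddGroup.mk (dlogWedge L i (x - x ^ p) fun j => (y j : L))}

/-- `H_p^{i+1}(L)`: the cokernel of `℘ = 1 - C⁻¹ : Ω^i_L → Ω^i_L/dΩ^{i-1}_L`. -/
noncomputable abbrev Hgroup (L : Type*) [Field L] (p i : ℕ) :=
  ((⋀[L]^i (Ω[L⁄ℤ])) ⧸ exactWedges L i) ⧸ wpImage L p i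

/-- The class of `x·dlog y₁∧⋯∧dlog y_i` in `H_p^{i+1}(L)`. -/
noncomputable def Hclass (L : Type*) [Field L] (p i : ℕ) (x : L) (y : Fin i → L) :
    Hgroup L p i := QuotientAddGroup.mk (QuotientAddGroup.mk (dlogWedge L i x y))

/-- The additive subgroup `℘(L) = {x - x^p}` of `L`. -/
def wpRange (L : Type*) [Field L] (p : ℕ) : AddSubgroup L :=
  AddSubgroup.closure {y | ∃ x : L, y = x - x ^ p}

/-- The additive subgroup `L_{>0} = ⊕_{ϑ ≠ 0} L^p b^ϑ` attached to a `p`-basis `b`. -/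
def gtZero (L : Type*) [Field L] (p : ℕ) {n : ℕ} (b : Fin n → L) : AddSubgroup L :=
  AddSubgroup.closure {y | ∃ (x : L) (ϑ : Fin n → ℕ),
    (∀ i, ϑ i < p) ∧ ϑ ≠ 0 ∧ y = x ^ p * ∏ i, b i ^ ϑ i}

/-!
Both directions come from reading off the constant coefficient. Every Laurent series is congruent
to its constant term: the part with positive exponents lies in `℘(k((t)))` by Hensel's lemma for
`Y ^ p - Y + f` over `k[[t]]`, and a monomial `a t ^ n` with `n < 0` is handled by expanding `a`
in the `p`-basis as a sum of terms `d ^ p b ^ ϑ` and writing `n = p q + j` with `0 ≤ j < p`: each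
term `d ^ p b ^ ϑ t ^ n` lies in `k((t))_{>0}` unless `ϑ = 0` and `j = 0`, in which case it is
`(d t ^ q) ^ p ≡ d t ^ q` modulo `℘`, with `|q| < |n|`. Conversely `(x ^ p)_{p n} = (x_n) ^ p` and
`(x ^ p)_m = 0` for `p ∤ m`, so the constant coefficient sends `x - x ^ p` to `x₀ - x₀ ^ p` and
`x ^ p b ^ ϑ t ^ j` (`0 ≤ j < p`) to `x₀ ^ p b ^ ϑ` or to `0`.
-/

open scoped PowerSeries LaurentSeries

theorem pthPowers_eq_range_frobenius (A : Type*) [CommRing A] (p : ℕ) [ExpChar A p] :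
    pthPowers A p = (frobenius A p).range := by
  rw [pthPowers, ← Subring.closure_eq (frobenius A p).range, RingHom.coe_range]
  rfl

theorem IsPBasis.mem_closure_pow_mul_prod {A ι : Type*} [CommRing A] [Fintype ι] {p : ℕ}
    [ExpChar A p] {b : ι → A} (hb : IsPBasis p b) (a : A) :
    a ∈ AddSubgroup.closure
      {y | ∃ (d : A) (ϑ : ι → ℕ), (∀ i, ϑ i < p) ∧ y = d ^ p * ∏ i, b i ^ ϑ i} := by
  obtain ⟨c, rfl⟩ :=
    Finsupp.mem_span_range_iff_exists_finsupp.mp (hb.2 (Submodule.mem_top (x := a)))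
  refine AddSubgroup.sum_mem _ fun ϑ _ => AddSubgroup.subset_closure ?_
  obtain ⟨d, hd⟩ : ∃ d, frobenius A p d = c ϑ := by
    rw [← RingHom.mem_range, ← pthPowers_eq_range_frobenius]
    exact (c ϑ).2
  exact ⟨d, ϑ.1, ϑ.2, by
    beta_reduce
    rw [Subring.smul_def, ← hd, frobenius_def, Finsupp.prod_fintype _ _ fun i => pow_zero _,
      smul_eq_mul]⟩

namespace PowerSeries

theorem coeff_pow_char {R : Type*} [CommRing R] (p : ℕ) [ExpChar R p] (φ : R⟦X⟧) (n : ℕ) :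
    coeff n (φ ^ p) = if p ∣ n then coeff (n / p) φ ^ p else 0 := by
  rw [← MvPowerSeries.map_frobenius_expand p (expChar_ne_zero R p)]
  change coeff n (map (frobenius R p) (expand p (expChar_ne_zero R p) φ)) = _
  rw [coeff_map, coeff_expand]
  split_ifs <;> simp [frobenius_def, zero_pow (expChar_ne_zero R p)]

theorem exists_eq_sub_pow_of_constantCoeff_eq_zero {R : Type*} [CommRing R] {p : ℕ}
    (hp : 2 ≤ p) {φ : R⟦X⟧} (hφ : constantCoeff φ = 0) : ∃ ψ : R⟦X⟧, φ = ψ - ψ ^ p := by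
  have hP : (Polynomial.X ^ p + (Polynomial.C φ - Polynomial.X)).Monic := by
    refine Polynomial.monic_X_pow_add ((Polynomial.degree_sub_le _ _).trans_lt (max_lt ?_ ?_))
    · exact Polynomial.degree_C_le.trans_lt (by exact_mod_cast (by omega : 0 < p))
    · exact Polynomial.degree_X_le.trans_lt (by exact_mod_cast (by omega : 1 < p))
  obtain ⟨ψ, hψ, -⟩ := HenselianRing.is_henselian (I := Ideal.span {X}) _ hP 0
    (by simpa [zero_pow (by omega : p ≠ 0), Ideal.mem_span_singleton, X_dvd_iff] using hφ)
    (by simp [Polynomial.derivative_X_pow, zero_pow (by omega : p - 1 ≠ 0)])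
  refine ⟨ψ, ?_⟩
  simp only [Polynomial.IsRoot, Polynomial.eval_add, Polynomial.eval_sub, Polynomial.eval_pow,
    Polynomial.eval_X, Polynomial.eval_C] at hψ
  linear_combination hψ

end PowerSeries

namespace LaurentSeries

open HahnSeries

theorem pow_eq_single_mul_coe {R : Type*} [CommSemiring R] (x : R⸨X⸩) (n : ℕ) :
    x ^ n = single (n • x.order) 1 * ((x.powerSeriesPart ^ n : R⟦X⟧) : R⸨X⸩) := by
  conv_lhs => rw [← x.single_order_mul_powerSeriesPart]
  rw [mul_pow, single_pow, one_pow, PowerSeries.coe_pow]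

section CharP

variable {R : Type*} [CommRing R] (p : ℕ) [ExpChar R p]

theorem coeff_pow_char_mul (x : R⸨X⸩) (n : ℤ) : (x ^ p).coeff (p * n) = x.coeff n ^ p := by
  rw [pow_eq_single_mul_coe]
  rcases lt_or_ge n x.order with hn | hn
  · rw [coeff_eq_zero_of_lt_order hn, zero_pow (expChar_ne_zero R p),
      ← sub_add_cancel ((p : ℤ) * n) (p • x.order), coeff_single_mul_add, PowerSeries.coeff_coe,
      if_pos, mul_zero]
    rw [nsmul_eq_mul, sub_neg]
    exact mul_lt_mul_of_pos_left hn (by exact_mod_cast expChar_pos R p)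
  · obtain ⟨m, rfl⟩ := Int.le.dest hn
    rw [show (p : ℤ) * (x.order + m) = ((p * m : ℕ) : ℤ) + p • x.order by push_cast; ring,
      coeff_single_mul_add, one_mul, coeff_coe_powerSeries, PowerSeries.coeff_pow_char,
      if_pos (dvd_mul_right _ _), Nat.mul_div_cancel_left _ (expChar_pos R p),
      powerSeriesPart_coeff]

theorem coeff_zero_pow_char (x : R⸨X⸩) : (x ^ p).coeff 0 = x.coeff 0 ^ p := by
  simpa using coeff_pow_char_mul p x 0

theorem coeff_pow_char_of_not_dvd (x : R⸨X⸩) {n : ℤ} (hn : ¬ (p : ℤ) ∣ n) :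
    (x ^ p).coeff n = 0 := by
  rw [pow_eq_single_mul_coe, ← sub_add_cancel n (p • x.order), coeff_single_mul_add, one_mul,
    PowerSeries.coeff_coe]
  split_ifs with hneg
  · rfl
  rw [PowerSeries.coeff_pow_char, if_neg]
  intro hdvd
  refine hn ?_
  simpa [nsmul_eq_mul] using (Int.natCast_dvd.mpr hdvd).add (dvd_mul_right (p : ℤ) x.order)

end CharP

theorem mem_wpRange_of_coeff_nonpos_eq_zero {k : Type*} [Field k] {p : ℕ} (hp : 2 ≤ p)
    {f : k⸨X⸩} (hf : ∀ n ≤ 0, f.coeff n = 0) : f ∈ wpRange k⸨X⸩ p := by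
  obtain ⟨φ, rfl⟩ : ∃ φ : k⟦X⟧, (φ : k⸨X⸩) = f := by
    refine ⟨PowerSeries.mk fun n => f.coeff n, ?_⟩
    ext n
    rw [PowerSeries.coeff_coe]
    split_ifs with h
    · exact (hf n h.le).symm
    · simp [Int.natAbs_of_nonneg (not_lt.mp h)]
  obtain ⟨ψ, rfl⟩ := PowerSeries.exists_eq_sub_pow_of_constantCoeff_eq_zero hp
    (φ := φ) (by
      rw [← PowerSeries.coeff_zero_eq_constantCoeff_apply, ← coeff_coe_powerSeries]
      exact hf 0 le_rfl)
  exact AddSubgroup.subset_closure ⟨ψ, by push_cast; rfl⟩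

section PBasis

variable {k : Type*} [Field k] {p r : ℕ} (b : Fin r → k)

/-- The `p`-basis `b₁, …, b_r, t` of `k((t))`. -/
noncomputable abbrev snocX : Fin (r + 1) → k⸨X⸩ :=
  Fin.snoc (fun i => algebraMap k k⸨X⸩ (b i)) (single 1 1)

theorem prod_snocX_pow (ϑ : Fin (r + 1) → ℕ) :
    ∏ i, snocX b i ^ ϑ i = single (ϑ (Fin.last r) : ℤ) (∏ i : Fin r, b i ^ ϑ i.castSucc) := by
  simp only [Fin.prod_univ_castSucc, Fin.snoc_castSucc, Fin.snoc_last]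
  simp_rw [← map_pow, ← map_prod]
  rw [algebraMap_apply, C_apply, single_pow, single_mul_single]
  simp

theorem single_pow_mul_prod_snocX_pow (q : ℤ) (d : k) (ϑ : Fin r → ℕ) (j : ℕ) :
    single q d ^ p * ∏ i, snocX b i ^ Fin.snoc ϑ j i =
      single (p * q + j) (d ^ p * ∏ i, b i ^ ϑ i) := by
  rw [prod_snocX_pow, single_pow, single_mul_single]
  simp [Fin.snoc_castSucc]

variable [Fact p.Prime]

theorem single_pow_mul_prod_mem_wpRange_sup_gtZero {n : ℤ} (hn : n < 0)
    (ih : ∀ q, n < q → q < 0 → ∀ d, single q d ∈ wpRange k⸨X⸩ p ⊔ gtZero k⸨X⸩ p (snocX b))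
    (d : k) {ϑ : Fin r → ℕ} (hϑ : ∀ i, ϑ i < p) :
    single n (d ^ p * ∏ i, b i ^ ϑ i) ∈ wpRange k⸨X⸩ p ⊔ gtZero k⸨X⸩ p (snocX b) := by
  have hp : (2 : ℤ) ≤ p := by exact_mod_cast (Fact.out : p.Prime).two_le
  have hp0 : (0 : ℤ) < p := by omega
  obtain ⟨q, j, hj, rfl⟩ : ∃ (q : ℤ) (j : ℕ), j < p ∧ n = p * q + j :=
    ⟨n / p, (n % p).toNat, by have := Int.emod_lt_of_pos n hp0; omega,
      by rw [Int.toNat_of_nonneg (Int.emod_nonneg n hp0.ne'), Int.mul_ediv_add_emod]⟩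
  rw [← single_pow_mul_prod_snocX_pow]
  by_cases h0 : (Fin.snoc ϑ j : Fin (r + 1) → ℕ) = 0
  · obtain rfl : j = 0 := by simpa using congrFun h0 (Fin.last r)
    simp only [h0, Pi.zero_apply, pow_zero, Finset.prod_const_one, mul_one]
    simp only [Nat.cast_zero, add_zero] at hn ih
    rw [show single q d ^ p = single q d - (single q d - single q d ^ p) by ring]
    exact sub_mem (ih q (by nlinarith) (by nlinarith) d)
      (AddSubgroup.mem_sup_left (AddSubgroup.subset_closure ⟨_, rfl⟩))
  · refine AddSubgroup.mem_sup_right (AddSubgroup.subset_closure ⟨_, _, fun i => ?_, h0, rfl⟩)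
    induction i using Fin.lastCases <;> simp [hj, hϑ]

variable [CharP k p]

theorem single_mem_wpRange_sup_gtZero (hb : IsPBasis p b) {n : ℤ} (hn : n < 0) (a : k) :
    single n a ∈ wpRange k⸨X⸩ p ⊔ gtZero k⸨X⸩ p (snocX b) := by
  induction hm : n.natAbs using Nat.strong_induction_on generalizing n a with
  | _ m ih =>
  refine (AddSubgroup.closure_le (K := (wpRange k⸨X⸩ p ⊔ gtZero k⸨X⸩ p (snocX b)).comap
    (single.addMonoidHom n))).2 ?_ (hb.mem_closure_pow_mul_prod a)
  rintro _ ⟨d, ϑ, hϑ, rfl⟩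
  exact single_pow_mul_prod_mem_wpRange_sup_gtZero b hn
    (fun q hnq hq d => ih _ (by omega) hq d rfl) d hϑ

theorem sub_algebraMap_coeff_zero_mem_wpRange_sup_gtZero (hb : IsPBasis p b) (x : k⸨X⸩) :
    x - algebraMap k k⸨X⸩ (x.coeff 0) ∈ wpRange k⸨X⸩ p ⊔ gtZero k⸨X⸩ p (snocX b) := by
  rw [← add_sub_cancel (∑ m ∈ Finset.Ico x.order 0, single m (x.coeff m))
    (x - algebraMap k k⸨X⸩ (x.coeff 0))]
  refine add_mem (sum_mem fun m hm => single_mem_wpRange_sup_gtZero b hb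
    (Finset.mem_Ico.mp hm).2 _) (AddSubgroup.mem_sup_left ?_)
  refine mem_wpRange_of_coeff_nonpos_eq_zero (Fact.out : p.Prime).two_le fun n hn => ?_
  simp only [coeff_sub, coeff_sum, algebraMap_apply, C_apply]
  rcases hn.lt_or_eq with hn | rfl
  · rw [coeff_single_of_ne hn.ne, sub_zero, sub_eq_zero]
    by_cases ho : x.order ≤ n
    · rw [Finset.sum_eq_single_of_mem n (Finset.mem_Ico.2 ⟨ho, hn⟩) fun m _ hm =>
        coeff_single_of_ne hm.symm, coeff_single_same]
    · rw [coeff_eq_zero_of_lt_order (not_le.mp ho), Finset.sum_eq_zero fun m hm =>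
        coeff_single_of_ne <| by rintro rfl; exact ho (Finset.mem_Ico.1 hm).1]
  · rw [Finset.sum_eq_zero fun m hm => coeff_single_of_ne (Finset.mem_Ico.1 hm).2.ne']
    simp

theorem coeff_zero_mem_wpRange_sup_gtZero {y : k⸨X⸩}
    (hy : y ∈ wpRange k⸨X⸩ p ⊔ gtZero k⸨X⸩ p (snocX b)) :
    y.coeff 0 ∈ wpRange k p ⊔ gtZero k p b := by
  suffices h : wpRange k⸨X⸩ p ⊔ gtZero k⸨X⸩ p (snocX b) ≤
      (wpRange k p ⊔ gtZero k p b).comap (coeff.addMonoidHom 0) from h hy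
  refine sup_le ((AddSubgroup.closure_le _).2 ?_) ((AddSubgroup.closure_le _).2 ?_)
  · rintro _ ⟨x, rfl⟩
    exact AddSubgroup.mem_sup_left (AddSubgroup.subset_closure
      ⟨x.coeff 0, by simp [coeff_zero_pow_char]⟩)
  · rintro _ ⟨x, ϑ, hϑ, hϑ0, rfl⟩
    rw [SetLike.mem_coe, AddSubgroup.mem_comap, coeff.addMonoidHom_apply, prod_snocX_pow,
      ← neg_add_cancel (ϑ (Fin.last r) : ℤ), coeff_mul_single_add]
    rcases Nat.eq_zero_or_pos (ϑ (Fin.last r)) with hj | hj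
    · rw [hj, Nat.cast_zero, neg_zero, coeff_zero_pow_char]
      refine AddSubgroup.mem_sup_right (AddSubgroup.subset_closure
        ⟨x.coeff 0, fun i => ϑ i.castSucc, fun i => hϑ _, fun h => hϑ0 ?_, rfl⟩)
      funext i
      induction i using Fin.lastCases
      · exact hj
      · exact congrFun h _
    · rw [coeff_pow_char_of_not_dvd, zero_mul]
      · exact zero_mem _
      rw [dvd_neg, Int.natCast_dvd_natCast]
      exact Nat.not_dvd_of_pos_of_lt hj (hϑ _)

end PBasis

end LaurentSeries

/-- Let `k` be a field of characteristic `p > 0` of finite `p`-rank `r`, with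
`p`-basis `b₁, …, b_r`.  Then the canonical map
`k/(℘(k) + k_{>0}) → k((t))/(℘(k((t))) + k((t))_{>0})` induced by the inclusion `k ↪ k((t))`
is bijective, where `k((t))_{>0}` is taken with respect to the `p`-basis `b₁, …, b_r, t`. -/
theorem laurentSeries_wp_quotient_bijective {k : Type*} [Field k] (p r : ℕ) (hp : p.Prime)
    [CharP k p] (b : Fin r → k) (hb : IsPBasis p b) :
    (∀ x : LaurentSeries k, ∃ a : k,
        x - algebraMap k (LaurentSeries k) a ∈
          wpRange (LaurentSeries k) p ⊔
            gtZero (LaurentSeries k) p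
              (Fin.snoc (fun i => algebraMap k (LaurentSeries k) (b i))
                (HahnSeries.single 1 1))) ∧
    (∀ a : k,
        algebraMap k (LaurentSeries k) a ∈
          wpRange (LaurentSeries k) p ⊔
            gtZero (LaurentSeries k) p
              (Fin.snoc (fun i => algebraMap k (LaurentSeries k) (b i))
                (HahnSeries.single 1 1)) →
        a ∈ wpRange k p ⊔ gtZero k p b) := by
  have : Fact p.Prime := ⟨hp⟩
  refine ⟨fun x => ⟨x.coeff 0,
    LaurentSeries.sub_algebraMap_coeff_zero_mem_wpRange_sup_gtZero b hb x⟩, fun a ha => ?_⟩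
  simpa [LaurentSeries.algebraMap_apply] using
    LaurentSeries.coeff_zero_mem_wpRange_sup_gtZero b ha
end

section
/- (Weierstrass division) Let A be a complete separated local ring with maximal ideal m, and f ∈ A[[T]] a power series that is k-regular in T, i.e. congruent modulo m to u·T^k with u a unit of (A/m)[[T]]. Then for every g ∈ A[[T]] there exists a unique pair (q, r) with q ∈ A[[T]] and r ∈ A[T] of degree < k such that g = qf + r. -/
open IsLocalRing Polynomial

namespace PowerSeries

theorem order_unit_mul_X_pow {R : Type*} [CommSemiring R] [Nontrivial R] (u : R⟦X⟧ˣ) (k : ℕ) :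
    ((u : R⟦X⟧) * X ^ k).order = (k : ℕ∞) := by
  refine order_eq_nat.2 ⟨?_, fun i hi => ?_⟩
  · rw [coeff_mul_X_pow', if_pos le_rfl, Nat.sub_self, coeff_zero_eq_constantCoeff]
    exact (u.isUnit.map constantCoeff).ne_zero
  · rw [coeff_mul_X_pow', if_neg (by omega)]

variable {A : Type*} [CommRing A] [IsLocalRing A] {k : ℕ} {f : A⟦X⟧}
  {u : (A ⧸ maximalIdeal A)⟦X⟧ˣ}

theorem map_residue_ne_zero_of_eq_unit_mul_X_pow
    (hu : f.map (Ideal.Quotient.mk (maximalIdeal A)) = (u : (A ⧸ maximalIdeal A)⟦X⟧) * X ^ k) :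
    f.map (residue A) ≠ 0 := by
  intro h
  have : ((u : (A ⧸ maximalIdeal A)⟦X⟧) * X ^ k).order = ⊤ := by
    rw [← hu]
    exact order_eq_top.2 h
  simp [order_unit_mul_X_pow] at this

theorem isWeierstrassDivision_iff_of_eq_unit_mul_X_pow
    (hu : f.map (Ideal.Quotient.mk (maximalIdeal A)) = (u : (A ⧸ maximalIdeal A)⟦X⟧) * X ^ k)
    {g q : A⟦X⟧} {r : A[X]} :
    g.IsWeierstrassDivision f q r ↔ r.degree < k ∧ g = q * f + r := by
  rw [IsWeierstrassDivision, isWeierstrassDivisionAt_iff, hu, order_unit_mul_X_pow,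
    ENat.toNat_natCast, mul_comm f]

end PowerSeries

open PowerSeries in
/-- **Weierstrass division.**  Let `A` be a complete separated local ring with
maximal ideal `m`, and `f ∈ A[[T]]` a power series that is `k`-regular in `T` (its reduction
mod `m` is `T^k` times a unit of `(A/m)[[T]]`).  Then every `g ∈ A[[T]]` can be uniquely
written `g = q·f + r` with `q ∈ A[[T]]` and `r ∈ A[T]` of degree `< k`. -/
theorem weierstrass_division {A : Type u} [CommRing A] [IsLocalRing A]
    [IsAdicComplete (maximalIdeal A) A]
    (k : ℕ) (f : PowerSeries A)
    (hreg : ∃ u : (PowerSeries (A ⧸ maximalIdeal A))ˣ,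
      PowerSeries.map (Ideal.Quotient.mk (maximalIdeal A)) f = (u : PowerSeries (A ⧸ maximalIdeal A)) * PowerSeries.X ^ k) :
    ∀ g : PowerSeries A,
      ∃! qr : PowerSeries A × Polynomial A,
        qr.2.degree < (k : WithBot ℕ) ∧
        g = qr.1 * f + Polynomial.coeToPowerSeries.ringHom qr.2 := by
  obtain ⟨u, hu⟩ := hreg
  have hf := map_residue_ne_zero_of_eq_unit_mul_X_pow hu
  intro g
  obtain ⟨q, r, hqr⟩ := g.exists_isWeierstrassDivision hf
  refine ⟨(q, r), (isWeierstrassDivision_iff_of_eq_unit_mul_X_pow hu).1 hqr, ?_⟩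
  rintro ⟨q', r'⟩ hqr'
  obtain ⟨rfl, rfl⟩ :=
    ((isWeierstrassDivision_iff_of_eq_unit_mul_X_pow hu).2 hqr').elim hf hqr
  rfl
end

section
/- Let K be a field of characteristic p > 0 and K^sep a separable closure. Then the separable closure of K^{p^∞} inside K^sep equals (K^sep)^{p^∞}, where for a field L, L^{p^∞} = ⋂_{n≥0} L^{p^n} is the maximal perfect subfield. -/
/-- The maximal perfect subfield `L^{p^∞} = ⋂_n L^{p^n}` of a field `L`
(in characteristic `p`, `Subfield.closure (Set.range (· ^ p ^ n))` is exactly the subfield of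
`p^n`-th powers). -/
def perfectCore (L : Type*) [Field L] (p : ℕ) : Subfield L :=
  ⨅ n : ℕ, Subfield.closure (Set.range (· ^ p ^ n))

universe u

/-!
Write `φₙ` for the `n`-fold Frobenius. If `x` is a root of a separable `q` whose coefficients are
`p^n`-th powers, then `q = φₙ r` with `r` separable; `r` splits in `K^sep`, so every root of `q`
is `φₙ` of a root of `r`. Conversely, if `x = φₙ y` then `minpoly K x = φₙ (minpoly K y)`
because `y` is separable, so the coefficients of `minpoly K x` are `p^n`-th powers.
-/

open Polynomial

theorem mem_perfectCore_iff {L : Type*} [Field L] {p : ℕ} [ExpChar L p] {x : L} :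
    x ∈ perfectCore L p ↔ ∀ n : ℕ, x ∈ (iterateFrobenius L p n).fieldRange := by
  have closure_eq (n : ℕ) : Subfield.closure (Set.range ((· ^ p ^ n) : L → L)) =
      (iterateFrobenius L p n).fieldRange := by
    have pow_eq : (· ^ p ^ n) = ⇑(iterateFrobenius L p n) :=
      funext fun y => (iterateFrobenius_def p n y).symm
    rw [pow_eq, ← RingHom.coe_fieldRange, Subfield.closure_eq]
  simp only [perfectCore, Subfield.mem_iInf, closure_eq]

section

variable {K L : Type*} [Field K] [Field L] [Algebra K L] {p : ℕ} [ExpChar K p] [ExpChar L p]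

theorem mem_fieldRange_iterateFrobenius_of_aeval_eq_zero [IsSepClosed L] {n : ℕ} {q : K[X]}
    (hsep : q.Separable) (hq : q ∈ (mapRingHom (iterateFrobenius K p n)).range) {x : L}
    (hx : aeval x q = 0) : x ∈ (iterateFrobenius L p n).fieldRange := by
  obtain ⟨r, rfl⟩ := hq
  have hr : r.Separable := (separable_map _).mp hsep
  have hsplit : (r.map (algebraMap K L)).Splits := IsSepClosed.splits_codomain r hr
  have hroot : ((r.map (algebraMap K L)).map (iterateFrobenius L p n)).IsRoot x := by
    rwa [map_map, ← RingHom.iterateFrobenius_comm, ← map_map, IsRoot, eval_map,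
      ← aeval_def]
  exact hsplit.mem_range_of_isRoot (map_ne_zero hr.ne_zero) hroot

theorem coeff_minpoly_mem_perfectCore [Algebra.IsSeparable K L] {x : L}
    (hx : x ∈ perfectCore L p) (i : ℕ) : (minpoly K x).coeff i ∈ perfectCore K p := by
  refine mem_perfectCore_iff.mpr fun n => ?_
  obtain ⟨y, rfl⟩ := mem_perfectCore_iff.mp hx n
  rw [minpoly.iterateFrobenius_of_isSeparable p n (Algebra.IsSeparable.isSeparable K y),
    coeff_map]
  exact RingHom.mem_fieldRange_self _ _

end

/-- Let `K` be a field of characteristic `p > 0` and `K^sep` a separable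
closure.  An element `x ∈ K^sep` is algebraic separable over `K^{p^∞}` (i.e. a root of a
nonzero separable polynomial with coefficients in `K^{p^∞}`) if and only if
`x ∈ (K^sep)^{p^∞}`; that is, the separable closure of `K^{p^∞}` inside `K^sep` equals
`(K^sep)^{p^∞}`. -/
theorem sepClosure_perfectCore {K Ksep : Type u} [Field K] [Field Ksep] [Algebra K Ksep]
    [IsSepClosure K Ksep] (p : ℕ) (hp : p.Prime) [CharP K p] :
    ∀ x : Ksep,
      (∃ q : Polynomial K, q ≠ 0 ∧ q.Separable ∧ (∀ i, q.coeff i ∈ perfectCore K p) ∧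
        Polynomial.aeval x q = 0) ↔ x ∈ perfectCore Ksep p := by
  intro x
  have : Fact p.Prime := ⟨hp⟩
  have : ExpChar Ksep p := expChar_of_injective_algebraMap (algebraMap K Ksep).injective p
  have : IsSepClosed Ksep := IsSepClosure.sep_closed K
  have : Algebra.IsSeparable K Ksep := IsSepClosure.separable
  constructor
  · rintro ⟨q, -, hsep, hcoeff, hx⟩
    refine mem_perfectCore_iff.mpr fun n => ?_
    have hq : q ∈ (mapRingHom (iterateFrobenius K p n)).range :=
      (mem_map_range _).mpr fun i => mem_perfectCore_iff.mp (hcoeff i) n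
    exact mem_fieldRange_iterateFrobenius_of_aeval_eq_zero hsep hq hx
  · intro hx
    exact ⟨minpoly K x, minpoly.ne_zero (Algebra.IsSeparable.isIntegral K x),
      Algebra.IsSeparable.isSeparable K x, coeff_minpoly_mem_perfectCore hx, minpoly.aeval K x⟩
end
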